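/- arXiv:1808.08264 — 2 statements merged into one kernel-verified Lean document; each statement's English description precedes it below -/
import Mathlib

section
/- Let 𝐗₁ = (X₁; Y₁) and 𝐗₂ = (X₂; Y₂) be frames for Lagrangian subspaces ℓ₁ and ℓ₂ of ℂ^{2n}. Then dim ker(W̃ + I) = dim(ℓ₁ ∩ ℓ₂); i.e., the multiplicity of −1 as an eigenvalue of the unitary matrix W̃ equals the dimension of the intersection ℓ₁ ∩ ℓ₂. -/
open Matrix

noncomputable section

def Jmat (n : ℕ) : Matrix (Fin n ⊕ Fin n) (Fin n ⊕ Fin n) ℂ :=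
  Matrix.fromBlocks 0 (-1) 1 0

/-- The `2n × n` matrix with `n × n` blocks `X` (top) and `Y` (bottom). -/
def frame {n : ℕ} (X Y : Matrix (Fin n) (Fin n) ℂ) :
    Matrix (Fin n ⊕ Fin n) (Fin n) ℂ :=
  Matrix.fromRows X Y

/-- A subspace `ℓ ⊆ ℂ^{2n}` is Lagrangian if it has dimension `n` and
`(Ju, v) = 0` for all `u, v ∈ ℓ`. -/
def IsLagrangianSubspace (n : ℕ) (ℓ : Submodule ℂ ((Fin n ⊕ Fin n) → ℂ)) : Prop :=
  Module.finrank ℂ ℓ = n ∧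
    ∀ u ∈ ℓ, ∀ v ∈ ℓ, star ((Jmat n) *ᵥ u) ⬝ᵥ v = 0

/-- The column span of the frame `(X; Y)`. -/
def frameSpan {n : ℕ} (X Y : Matrix (Fin n) (Fin n) ℂ) :
    Submodule ℂ ((Fin n ⊕ Fin n) → ℂ) :=
  Submodule.span ℂ (Set.range (frame X Y)ᵀ)

/-- `(X; Y)` is a frame for a Lagrangian subspace of `ℂ^{2n}`:
its columns span a Lagrangian subspace. -/
def IsLagrangianFrame {n : ℕ} (X Y : Matrix (Fin n) (Fin n) ℂ) : Prop :=
  IsLagrangianSubspace n (frameSpan X Y)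

/-- `W̃ := −(X₁ + iY₁)(X₁ − iY₁)⁻¹(X₂ − iY₂)(X₂ + iY₂)⁻¹`. -/
def tW {n : ℕ} (X₁ Y₁ X₂ Y₂ : Matrix (Fin n) (Fin n) ℂ) : Matrix (Fin n) (Fin n) ℂ :=
  -((X₁ + Complex.I • Y₁) * (X₁ - Complex.I • Y₁)⁻¹ *
    ((X₂ - Complex.I • Y₂) * (X₂ + Complex.I • Y₂)⁻¹))

/-!
If `(X; Y)` frames a Lagrangian subspace then `star (X v) ⬝ᵥ Y v = star (Y v) ⬝ᵥ X v`; with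
`X v = -c • Y v` for a nonzero imaginary `c` this forces `Y v = 0`, so `X ± iY` is invertible.
Write `Aⱼ = Xⱼ + iYⱼ`, `Bⱼ = Xⱼ - iYⱼ`. Then `W̃ (A₂ w) = -A₂ w` exactly when `u := B₁⁻¹ B₂ w`
satisfies `A₁ u = A₂ w` and `B₁ u = B₂ w`, i.e. `X₁ u = X₂ w` and `Y₁ u = Y₂ w`, i.e. `𝐗₂ w ∈ ℓ₁`.
So `A₂` maps `{w | 𝐗₂ w ∈ ℓ₁}` onto `ker (W̃ + 1)`, and the injective frame `𝐗₂` maps it onto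
`ℓ₁ ∩ ℓ₂`.
-/

open Complex

section Frames

variable {n : ℕ}

theorem frame_mulVec (X Y : Matrix (Fin n) (Fin n) ℂ) (v : Fin n → ℂ) :
    frame X Y *ᵥ v = Sum.elim (X *ᵥ v) (Y *ᵥ v) :=
  fromRows_mulVec X Y v

theorem frame_mulVec_eq_frame_mulVec_iff {X₁ Y₁ X₂ Y₂ : Matrix (Fin n) (Fin n) ℂ}
    {u w : Fin n → ℂ} :
    frame X₁ Y₁ *ᵥ u = frame X₂ Y₂ *ᵥ w ↔ X₁ *ᵥ u = X₂ *ᵥ w ∧ Y₁ *ᵥ u = Y₂ *ᵥ w := by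
  simp only [frame_mulVec, Sum.elim_eq_iff]

theorem frameSpan_eq_range (X Y : Matrix (Fin n) (Fin n) ℂ) :
    frameSpan X Y = LinearMap.range (frame X Y).mulVecLin :=
  (range_mulVecLin _).symm

theorem Jmat_mulVec_sumElim (p q : Fin n → ℂ) :
    Jmat n *ᵥ Sum.elim p q = Sum.elim (-q) p := by
  simp [Jmat, fromBlocks_mulVec, neg_mulVec]

variable {X Y : Matrix (Fin n) (Fin n) ℂ}

theorem IsLagrangianFrame.injective_mulVec (h : IsLagrangianFrame X Y) :
    Function.Injective (frame X Y).mulVec := by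
  have hrank := LinearMap.finrank_range_add_finrank_ker (frame X Y).mulVecLin
  rw [← frameSpan_eq_range, h.1, Module.finrank_fin_fun] at hrank
  have hker : LinearMap.ker (frame X Y).mulVecLin = ⊥ :=
    Submodule.finrank_eq_zero.mp (by omega)
  exact LinearMap.ker_eq_bot.mp hker

theorem IsLagrangianFrame.star_mulVec_dotProduct_comm (h : IsLagrangianFrame X Y)
    (v : Fin n → ℂ) : star (X *ᵥ v) ⬝ᵥ (Y *ᵥ v) = star (Y *ᵥ v) ⬝ᵥ (X *ᵥ v) := by
  have hv : frame X Y *ᵥ v ∈ frameSpan X Y := by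
    rw [frameSpan_eq_range]
    exact ⟨v, rfl⟩
  have hJ := h.2 _ hv _ hv
  rw [frame_mulVec, Jmat_mulVec_sumElim, Function.star_sumElim, sumElim_dotProduct_sumElim,
    star_neg, neg_dotProduct] at hJ
  linear_combination hJ

open ComplexOrder in
theorem IsLagrangianFrame.isUnit_add_smul (h : IsLagrangianFrame X Y) {c : ℂ} (hc₀ : c ≠ 0)
    (hc : star c = -c) : IsUnit (X + c • Y) := by
  rw [← mulVec_injective_iff_isUnit, ← coe_mulVecLin, ← LinearMap.ker_eq_bot,
    ker_mulVecLin_eq_bot_iff]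
  intro v hv
  have hX : X *ᵥ v = -(c • Y *ᵥ v) := by
    rw [add_mulVec, smul_mulVec] at hv
    exact eq_neg_of_add_eq_zero_left hv
  have hY : c * (star (Y *ᵥ v) ⬝ᵥ Y *ᵥ v) = -(c * (star (Y *ᵥ v) ⬝ᵥ Y *ᵥ v)) := by
    have := h.star_mulVec_dotProduct_comm v
    rwa [hX, star_neg, star_smul, hc, neg_dotProduct, dotProduct_neg, smul_dotProduct,
      dotProduct_smul, neg_smul, neg_neg, smul_eq_mul] at this
  have hY₀ : Y *ᵥ v = 0 := by
    rw [eq_neg_iff_add_eq_zero, ← two_mul, mul_eq_zero, mul_eq_zero] at hY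
    exact dotProduct_star_self_eq_zero.mp (by simpa [hc₀] using hY)
  apply h.injective_mulVec
  rw [frame_mulVec, frame_mulVec, hX, hY₀]
  simp

theorem IsLagrangianFrame.isUnit_add_I_smul (h : IsLagrangianFrame X Y) :
    IsUnit (X + I • Y) :=
  h.isUnit_add_smul I_ne_zero (by simp)

theorem IsLagrangianFrame.isUnit_sub_I_smul (h : IsLagrangianFrame X Y) :
    IsUnit (X - I • Y) := by
  simpa [sub_eq_add_neg] using h.isUnit_add_smul (neg_ne_zero.mpr I_ne_zero) (by simp)

end Frames

theorem Submodule.finrank_map_of_injective {K V W : Type*} [DivisionRing K] [AddCommGroup V]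
    [Module K V] [AddCommGroup W] [Module K W] {f : V →ₗ[K] W} (hf : Function.Injective f)
    (p : Submodule K V) : Module.finrank K (p.map f) = Module.finrank K p :=
  (p.equivMapOfInjective f hf).finrank_eq.symm

theorem add_I_smul_eq_and_sub_I_smul_eq_iff {V : Type*} [AddCommGroup V] [Module ℂ V]
    {p₁ q₁ p₂ q₂ : V} :
    p₁ + I • q₁ = p₂ + I • q₂ ∧ p₁ - I • q₁ = p₂ - I • q₂ ↔ p₁ = p₂ ∧ q₁ = q₂ := by
  constructor
  · rintro ⟨hadd, hsub⟩
    have h2I : (2 * I) • q₁ = (2 * I) • q₂ := by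
      linear_combination (norm := module) hadd - hsub
    have hq : q₁ = q₂ := smul_right_injective V (by simp) h2I
    exact ⟨add_right_cancel (hq ▸ hadd), hq⟩
  · rintro ⟨rfl, rfl⟩
    exact ⟨rfl, rfl⟩

theorem Matrix.exists_mulVec_eq_and_mulVec_eq_iff {m R : Type*} [Fintype m] [DecidableEq m]
    [CommRing R] {A₁ B₁ A₂ B₂ : Matrix m m R} (hB₁ : IsUnit B₁) (hA₂ : IsUnit A₂)
    (w : m → R) :
    (∃ u, A₁ *ᵥ u = A₂ *ᵥ w ∧ B₁ *ᵥ u = B₂ *ᵥ w) ↔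
      (A₁ * B₁⁻¹ * (B₂ * A₂⁻¹)) *ᵥ (A₂ *ᵥ w) = A₂ *ᵥ w := by
  rw [isUnit_iff_isUnit_det] at hB₁ hA₂
  have hM : (A₁ * B₁⁻¹ * (B₂ * A₂⁻¹)) *ᵥ (A₂ *ᵥ w) = A₁ *ᵥ (B₁⁻¹ *ᵥ (B₂ *ᵥ w)) := by
    simp only [mulVec_mulVec, Matrix.mul_assoc, nonsing_inv_mul _ hA₂, Matrix.mul_one]
  rw [hM]
  constructor
  · rintro ⟨u, hA, hB⟩
    rw [← hB, mulVec_mulVec u, nonsing_inv_mul _ hB₁, one_mulVec, hA]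
  · intro h
    exact ⟨_, h, by rw [mulVec_mulVec, mul_nonsing_inv _ hB₁, one_mulVec]⟩

theorem comap_ker_tW_add_one {n : ℕ} {X₁ Y₁ X₂ Y₂ : Matrix (Fin n) (Fin n) ℂ}
    (hB₁ : IsUnit (X₁ - I • Y₁)) (hA₂ : IsUnit (X₂ + I • Y₂)) :
    (LinearMap.ker (tW X₁ Y₁ X₂ Y₂ + 1).mulVecLin).comap (X₂ + I • Y₂).mulVecLin =
      (frameSpan X₁ Y₁).comap (frame X₂ Y₂).mulVecLin := by
  ext w
  simp only [Submodule.mem_comap, LinearMap.mem_ker, mulVecLin_apply, frameSpan_eq_range,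
    LinearMap.mem_range, frame_mulVec_eq_frame_mulVec_iff]
  rw [add_mulVec, one_mulVec, tW, neg_mulVec, neg_add_eq_zero,
    ← exists_mulVec_eq_and_mulVec_eq_iff hB₁ hA₂]
  simp only [add_mulVec, sub_mulVec, smul_mulVec, add_I_smul_eq_and_sub_I_smul_eq_iff]

/-- For frames `𝐗₁ = (X₁; Y₁)`, `𝐗₂ = (X₂; Y₂)` of Lagrangian subspaces
`ℓ₁`, `ℓ₂` of `ℂ^{2n}`, `dim ker(W̃ + I) = dim(ℓ₁ ∩ ℓ₂)`: the multiplicity of `−1` as an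
eigenvalue of the unitary matrix `W̃` equals the dimension of `ℓ₁ ∩ ℓ₂`. -/
theorem ker_tW_add_one_eq_dim_inter {n : ℕ} (X₁ Y₁ X₂ Y₂ : Matrix (Fin n) (Fin n) ℂ)
    (h₁ : IsLagrangianFrame X₁ Y₁) (h₂ : IsLagrangianFrame X₂ Y₂) :
    Module.finrank ℂ (LinearMap.ker (tW X₁ Y₁ X₂ Y₂ + 1).mulVecLin) =
      Module.finrank ℂ (frameSpan X₁ Y₁ ⊓ frameSpan X₂ Y₂ : Submodule ℂ ((Fin n ⊕ Fin n) → ℂ)) := by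
  have hA₂ := h₂.isUnit_add_I_smul
  set K := LinearMap.ker (tW X₁ Y₁ X₂ Y₂ + 1).mulVecLin
  calc Module.finrank ℂ K = Module.finrank ℂ ((K.comap (X₂ + I • Y₂).mulVecLin).map
          (X₂ + I • Y₂).mulVecLin) := by
        rw [Submodule.map_comap_eq_of_surjective (mulVec_surjective_iff_isUnit.mpr hA₂)]
    _ = Module.finrank ℂ ((frameSpan X₁ Y₁).comap (frame X₂ Y₂).mulVecLin) := by
        rw [Submodule.finrank_map_of_injective (mulVec_injective_iff_isUnit.mpr hA₂),
          comap_ker_tW_add_one h₁.isUnit_sub_I_smul hA₂]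
    _ = Module.finrank ℂ (frameSpan X₁ Y₁ ⊓ frameSpan X₂ Y₂ : Submodule ℂ _) := by
        rw [← Submodule.finrank_map_of_injective (f := (frame X₂ Y₂).mulVecLin)
          h₂.injective_mulVec, Submodule.map_comap_eq, ← frameSpan_eq_range, inf_comm]
end
end

section
/- Let 𝐗₁(t) = (X₁(t); Y₁(t)) and 𝐗₂(t) = (X₂(t); Y₂(t)) be differentiable paths of frames for Lagrangian subspaces of ℂ^{2n}, and set W̃₁(t) = (X₁(t) + iY₁(t))(X₁(t) − iY₁(t))^{-1}, W̃₂(t) = (X₂(t) − iY₂(t))(X₂(t) + iY₂(t))^{-1}, and W̃(t) = −W̃₁(t)W̃₂(t). Then W̃₁' = iW̃₁Ω̃₁ with Ω̃₁ = −2((X₁ − iY₁)^{-1})* 𝐗₁* J 𝐗₁' (X₁ − iY₁)^{-1}, W̃₂' = iW̃₂Ω̃₂ with Ω̃₂ = 2((X₂ + iY₂)^{-1})* 𝐗₂* J 𝐗₂' (X₂ + iY₂)^{-1}, and W̃' = iW̃Ω̃ with Ω̃ = W̃₂* Ω̃₁ W̃₂ + Ω̃₂. -/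
open Matrix

noncomputable section

def W1 {n : ℕ} (X Y : Matrix (Fin n) (Fin n) ℂ) : Matrix (Fin n) (Fin n) ℂ :=
  (X + Complex.I • Y) * (X - Complex.I • Y)⁻¹

def W2 {n : ℕ} (X Y : Matrix (Fin n) (Fin n) ℂ) : Matrix (Fin n) (Fin n) ℂ :=
  (X - Complex.I • Y) * (X + Complex.I • Y)⁻¹

/-- `Ω̃₁ = −2((X − iY)⁻¹)* 𝐗* J 𝐗' (X − iY)⁻¹`. -/
def Om1 {n : ℕ} (X Y X' Y' : Matrix (Fin n) (Fin n) ℂ) : Matrix (Fin n) (Fin n) ℂ :=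
  (-2 : ℂ) • (((X - Complex.I • Y)⁻¹)ᴴ *
    ((frame X Y)ᴴ * (Jmat n * frame X' Y')) * (X - Complex.I • Y)⁻¹)

/-- `Ω̃₂ = 2((X + iY)⁻¹)* 𝐗* J 𝐗' (X + iY)⁻¹`. -/
def Om2 {n : ℕ} (X Y X' Y' : Matrix (Fin n) (Fin n) ℂ) : Matrix (Fin n) (Fin n) ℂ :=
  (2 : ℂ) • (((X + Complex.I • Y)⁻¹)ᴴ *
    ((frame X Y)ᴴ * (Jmat n * frame X' Y')) * (X + Complex.I • Y)⁻¹)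

/-!
Write `P = X - iY`, `Q = X + iY`. For a Lagrangian frame `𝐗ᴴ J 𝐗 = Yᴴ X - Xᴴ Y = 0`, hence
`Pᴴ P = Qᴴ Q = 𝐗ᴴ 𝐗`; as the columns of `𝐗` are independent, `P` and `Q` are invertible and
`P Q⁻¹` is unitary. The derivative of `Q P⁻¹` is `Q' P⁻¹ - Q P⁻¹ P' P⁻¹`; multiplying it on the
left by `Qᴴ` and using `Qᴴ Q = Pᴴ P` shows that it equals `Q P⁻¹ (P⁻¹)ᴴ (Qᴴ Q' - Pᴴ P') P⁻¹`,
and `Qᴴ Q' - Pᴴ P' = -2i 𝐗ᴴ J 𝐗'`. This gives `W̃₁'`, and `W̃₂'` by exchanging `P` and `Q`.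
The formula for `W̃'` is the product rule together with `W̃₂ W̃₂ᴴ = 1`.
-/

section Cayley

variable {m : Type*} [Fintype m] [DecidableEq m] {R : Type*} [CommRing R] [StarRing R]

theorem mul_inv_mem_unitaryGroup {P Q : Matrix m m R} (hQ : IsUnit Q) (h : Pᴴ * P = Qᴴ * Q) :
    P * Q⁻¹ ∈ unitaryGroup m R := by
  rw [mem_unitaryGroup_iff', star_eq_conjTranspose, conjTranspose_mul, conjTranspose_nonsing_inv]
  calc (Qᴴ)⁻¹ * Pᴴ * (P * Q⁻¹) = (Qᴴ)⁻¹ * (Pᴴ * P) * Q⁻¹ := by simp only [Matrix.mul_assoc]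
    _ = 1 := by
      rw [h, nonsing_inv_mul_cancel_left _ _ ((isUnit_iff_isUnit_det _).mp
        ((isUnit_conjTranspose Q).mpr hQ)), mul_nonsing_inv _ ((isUnit_iff_isUnit_det Q).mp hQ)]

theorem mul_inv_deriv_eq_of_conjTranspose_mul_self_eq {P Q P' Q' M : Matrix m m R}
    (hP : IsUnit P) (hQ : IsUnit Q) (hPQ : Qᴴ * Q = Pᴴ * P) (c : R)
    (hD : Qᴴ * Q' - Pᴴ * P' = c • M) :
    Q' * P⁻¹ - Q * (P⁻¹ * P' * P⁻¹) = c • (Q * P⁻¹ * ((P⁻¹)ᴴ * M * P⁻¹)) := by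
  have hPd : IsUnit P.det := (isUnit_iff_isUnit_det P).mp hP
  refine ((isUnit_conjTranspose Q).mpr hQ).mul_left_cancel ?_
  calc Qᴴ * (Q' * P⁻¹ - Q * (P⁻¹ * P' * P⁻¹))
      = (Qᴴ * Q' - Pᴴ * P * P⁻¹ * P') * P⁻¹ := by
        simp only [Matrix.mul_sub, Matrix.sub_mul, ← Matrix.mul_assoc, hPQ]
    _ = c • (M * P⁻¹) := by
        rw [mul_nonsing_inv_cancel_right _ _ hPd, hD, Matrix.smul_mul]
    _ = Qᴴ * (c • (Q * P⁻¹ * ((P⁻¹)ᴴ * M * P⁻¹))) := by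
        rw [Matrix.mul_smul, conjTranspose_nonsing_inv]
        simp only [← Matrix.mul_assoc, hPQ]
        rw [mul_nonsing_inv_cancel_right _ _ hPd, mul_nonsing_inv _ ((isUnit_iff_isUnit_det _).mp
          ((isUnit_conjTranspose P).mpr hP)), Matrix.one_mul]

end Cayley

-- Any norm would do; the operator norm makes square matrices a normed algebra.
attribute [local instance] Matrix.linftyOpNormedAddCommGroup Matrix.linftyOpNormedRing
  Matrix.linftyOpNormedSpace Matrix.linftyOpNormedAlgebra

section Calculus

variable {m m' : Type*} [Fintype m] [Fintype m']

theorem hasDerivAt_matrix_iff {f : ℝ → Matrix m m' ℂ} {f' : Matrix m m' ℂ} {t : ℝ} :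
    HasDerivAt f f' t ↔ ∀ i j, HasDerivAt (fun s => f s i j) (f' i j) t := by
  let e : Matrix m m' ℂ ≃L[ℝ] (m → m' → ℂ) :=
    (Matrix.ofLinearEquiv ℝ).symm.toContinuousLinearEquiv
  have he : HasDerivAt f f' t ↔ HasDerivAt (e ∘ f) (e f') t :=
    ⟨e.hasFDerivAt.comp_hasDerivAt t, e.symm.hasFDerivAt.comp_hasDerivAt t⟩
  simp only [he, hasDerivAt_pi]
  rfl

variable [DecidableEq m]

theorem HasDerivAt.matrix_inv {A : ℝ → Matrix m m ℂ} {A' : Matrix m m ℂ} {t : ℝ}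
    (hA : HasDerivAt A A' t) (hu : IsUnit (A t)) :
    HasDerivAt (fun s => (A s)⁻¹) (-((A t)⁻¹ * A' * (A t)⁻¹)) t := by
  simp only [Matrix.nonsing_inv_eq_ringInverse]
  refine ((hasFDerivAt_ringInverse (𝕜 := ℝ) hu.unit).comp_hasDerivAt t hA).congr_deriv ?_
  simp [ContinuousLinearMap.mulLeftRight_apply, ← Matrix.nonsing_inv_eq_ringInverse]

theorem HasDerivAt.mul_inv_of_conjTranspose_mul_self_eq {P Q : ℝ → Matrix m m ℂ}
    {P' Q' M : Matrix m m ℂ} {t : ℝ}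
    (hP : HasDerivAt P P' t) (hQ : HasDerivAt Q Q' t) (hPu : IsUnit (P t)) (hQu : IsUnit (Q t))
    (hPQ : (Q t)ᴴ * Q t = (P t)ᴴ * P t) (c : ℂ) (hD : (Q t)ᴴ * Q' - (P t)ᴴ * P' = c • M) :
    HasDerivAt (fun s => Q s * (P s)⁻¹)
      (c • (Q t * (P t)⁻¹ * (((P t)⁻¹)ᴴ * M * (P t)⁻¹))) t := by
  refine (hQ.mul (hP.matrix_inv hPu)).congr_deriv ?_
  rw [← mul_inv_deriv_eq_of_conjTranspose_mul_self_eq hPu hQu hPQ c hD, Matrix.mul_neg,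
    sub_eq_add_neg]

end Calculus

section Lagrangian

variable {n : ℕ}

theorem Jmat_conjTranspose : (Jmat n)ᴴ = -Jmat n := by
  simp [Jmat, fromBlocks_conjTranspose, fromBlocks_neg]

theorem frame_conjTranspose_mul_Jmat_mul_frame (X Y X' Y' : Matrix (Fin n) (Fin n) ℂ) :
    (frame X Y)ᴴ * (Jmat n * frame X' Y') = Yᴴ * X' - Xᴴ * Y' := by
  simp only [frame, Jmat, fromBlocks_mul_fromRows,
    conjTranspose_fromRows_eq_fromCols_conjTranspose, fromCols_mul_fromRows, Matrix.zero_mul,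
    Matrix.one_mul, Matrix.neg_mul, Matrix.mul_neg, zero_add, add_zero, neg_add_eq_sub]

theorem frame_conjTranspose_mul_frame (X Y : Matrix (Fin n) (Fin n) ℂ) :
    (frame X Y)ᴴ * frame X Y = Xᴴ * X + Yᴴ * Y := by
  rw [frame, conjTranspose_fromRows_eq_fromCols_conjTranspose, fromCols_mul_fromRows]

theorem conjTranspose_sub_I_smul_mul_sub_I_smul (X Y X' Y' : Matrix (Fin n) (Fin n) ℂ) :
    (X - Complex.I • Y)ᴴ * (X' - Complex.I • Y')
      = (Xᴴ * X' + Yᴴ * Y') + Complex.I • (Yᴴ * X' - Xᴴ * Y') := by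
  simp only [conjTranspose_sub, conjTranspose_smul, Complex.star_def, Complex.conj_I,
    sub_mul, mul_sub, smul_mul_assoc, mul_smul_comm]
  match_scalars <;> simp

theorem conjTranspose_add_I_smul_mul_add_I_smul (X Y X' Y' : Matrix (Fin n) (Fin n) ℂ) :
    (X + Complex.I • Y)ᴴ * (X' + Complex.I • Y')
      = (Xᴴ * X' + Yᴴ * Y') - Complex.I • (Yᴴ * X' - Xᴴ * Y') := by
  simp only [conjTranspose_add, conjTranspose_smul, Complex.star_def, Complex.conj_I,
    add_mul, mul_add, smul_mul_assoc, mul_smul_comm]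
  match_scalars <;> simp

open scoped ComplexOrder in
theorem isUnit_of_conjTranspose_mul_self_eq {k m : Type*} [Fintype k] [Fintype m] [DecidableEq m]
    {F : Matrix k m ℂ} (hF : Function.Injective F.mulVec) {C : Matrix m m ℂ}
    (h : Cᴴ * C = Fᴴ * F) : IsUnit C := by
  refine mulVec_injective_iff_isUnit.mp
    ((injective_iff_map_eq_zero (mulVecLin C)).mpr fun v hv => ?_)
  refine (injective_iff_map_eq_zero (mulVecLin F)).mp hF v ?_
  rwa [mulVecLin_apply, ← conjTranspose_mul_self_mulVec_eq_zero, ← h,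
    conjTranspose_mul_self_mulVec_eq_zero]

namespace IsLagrangianFrame

variable {X Y : Matrix (Fin n) (Fin n) ℂ}

theorem conjTranspose_mul_sub_eq_zero (h : IsLagrangianFrame X Y) : Yᴴ * X - Xᴴ * Y = 0 := by
  rw [← frame_conjTranspose_mul_Jmat_mul_frame]
  ext k l
  have hcol : ∀ k, (frame X Y)ᵀ k ∈ frameSpan X Y := fun k =>
    Submodule.subset_span (Set.mem_range_self k)
  have h0 := h.2 _ (hcol k) _ (hcol l)
  rw [star_mulVec, ← dotProduct_mulVec, Jmat_conjTranspose, neg_mulVec, dotProduct_neg,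
    neg_eq_zero] at h0
  rw [Matrix.zero_apply, ← h0]
  simp [Matrix.mul_apply, dotProduct, mulVec, conjTranspose_apply]

theorem mulVec_frame_injective (h : IsLagrangianFrame X Y) :
    Function.Injective (frame X Y).mulVec := by
  rw [mulVec_injective_iff, linearIndependent_iff_card_eq_finrank_span, Fintype.card_fin]
  exact h.1.symm

theorem conjTranspose_sub_I_smul_mul_self (h : IsLagrangianFrame X Y) :
    (X - Complex.I • Y)ᴴ * (X - Complex.I • Y) = (frame X Y)ᴴ * frame X Y := by
  rw [conjTranspose_sub_I_smul_mul_sub_I_smul, h.conjTranspose_mul_sub_eq_zero, smul_zero,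
    add_zero, frame_conjTranspose_mul_frame]

theorem conjTranspose_add_I_smul_mul_self (h : IsLagrangianFrame X Y) :
    (X + Complex.I • Y)ᴴ * (X + Complex.I • Y) = (frame X Y)ᴴ * frame X Y := by
  rw [conjTranspose_add_I_smul_mul_add_I_smul, h.conjTranspose_mul_sub_eq_zero, smul_zero,
    sub_zero, frame_conjTranspose_mul_frame]

theorem isUnit_sub_I_smul_s14 (h : IsLagrangianFrame X Y) : IsUnit (X - Complex.I • Y) :=
  isUnit_of_conjTranspose_mul_self_eq h.mulVec_frame_injective h.conjTranspose_sub_I_smul_mul_self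

theorem isUnit_add_I_smul_s14 (h : IsLagrangianFrame X Y) : IsUnit (X + Complex.I • Y) :=
  isUnit_of_conjTranspose_mul_self_eq h.mulVec_frame_injective h.conjTranspose_add_I_smul_mul_self

theorem W2_mem_unitaryGroup (h : IsLagrangianFrame X Y) : W2 X Y ∈ unitaryGroup (Fin n) ℂ :=
  mul_inv_mem_unitaryGroup h.isUnit_add_I_smul_s14
    (h.conjTranspose_sub_I_smul_mul_self.trans h.conjTranspose_add_I_smul_mul_self.symm)

end IsLagrangianFrame

end Lagrangian

section Paths

variable {n : ℕ} {X Y : ℝ → Matrix (Fin n) (Fin n) ℂ} {X' Y' : Matrix (Fin n) (Fin n) ℂ} {t : ℝ}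

theorem HasDerivAt.add_I_smul (hX : HasDerivAt X X' t) (hY : HasDerivAt Y Y' t) :
    HasDerivAt (fun s => X s + Complex.I • Y s) (X' + Complex.I • Y') t :=
  hX.add (hY.const_smul Complex.I)

theorem HasDerivAt.sub_I_smul (hX : HasDerivAt X X' t) (hY : HasDerivAt Y Y' t) :
    HasDerivAt (fun s => X s - Complex.I • Y s) (X' - Complex.I • Y') t :=
  hX.sub (hY.const_smul Complex.I)

theorem hasDerivAt_W1 (hL : IsLagrangianFrame (X t) (Y t)) (hX : HasDerivAt X X' t)
    (hY : HasDerivAt Y Y' t) :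
    HasDerivAt (fun s => W1 (X s) (Y s))
      (Complex.I • (W1 (X t) (Y t) * Om1 (X t) (Y t) X' Y')) t := by
  have hD : (X t + Complex.I • Y t)ᴴ * (X' + Complex.I • Y')
        - (X t - Complex.I • Y t)ᴴ * (X' - Complex.I • Y')
      = (Complex.I * -2) • ((frame (X t) (Y t))ᴴ * (Jmat n * frame X' Y')) := by
    rw [conjTranspose_add_I_smul_mul_add_I_smul, conjTranspose_sub_I_smul_mul_sub_I_smul,
      frame_conjTranspose_mul_Jmat_mul_frame]
    module
  refine ((hX.sub_I_smul hY).mul_inv_of_conjTranspose_mul_self_eq (hX.add_I_smul hY)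
    hL.isUnit_sub_I_smul_s14 hL.isUnit_add_I_smul_s14
    (hL.conjTranspose_add_I_smul_mul_self.trans hL.conjTranspose_sub_I_smul_mul_self.symm) _
    hD).congr_deriv ?_
  rw [W1, Om1, Matrix.mul_smul, smul_smul]

theorem hasDerivAt_W2 (hL : IsLagrangianFrame (X t) (Y t)) (hX : HasDerivAt X X' t)
    (hY : HasDerivAt Y Y' t) :
    HasDerivAt (fun s => W2 (X s) (Y s))
      (Complex.I • (W2 (X t) (Y t) * Om2 (X t) (Y t) X' Y')) t := by
  have hD : (X t - Complex.I • Y t)ᴴ * (X' - Complex.I • Y')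
        - (X t + Complex.I • Y t)ᴴ * (X' + Complex.I • Y')
      = (Complex.I * 2) • ((frame (X t) (Y t))ᴴ * (Jmat n * frame X' Y')) := by
    rw [conjTranspose_add_I_smul_mul_add_I_smul, conjTranspose_sub_I_smul_mul_sub_I_smul,
      frame_conjTranspose_mul_Jmat_mul_frame]
    module
  refine ((hX.add_I_smul hY).mul_inv_of_conjTranspose_mul_self_eq (hX.sub_I_smul hY)
    hL.isUnit_add_I_smul_s14 hL.isUnit_sub_I_smul_s14
    (hL.conjTranspose_sub_I_smul_mul_self.trans hL.conjTranspose_add_I_smul_mul_self.symm) _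
    hD).congr_deriv ?_
  rw [W2, Om2, Matrix.mul_smul, smul_smul]

end Paths

/-- For differentiable paths of Lagrangian frames `𝐗₁(t)`, `𝐗₂(t)`, with
`W̃₁ = (X₁ + iY₁)(X₁ − iY₁)⁻¹`, `W̃₂ = (X₂ − iY₂)(X₂ + iY₂)⁻¹`, `W̃ = −W̃₁W̃₂`:
`W̃₁' = iW̃₁Ω̃₁`, `W̃₂' = iW̃₂Ω̃₂`, and `W̃' = iW̃Ω̃` with `Ω̃ = W̃₂*Ω̃₁W̃₂ + Ω̃₂`. -/
theorem unitary_path_derivatives {n : ℕ} (X₁ Y₁ X₂ Y₂ : ℝ → Matrix (Fin n) (Fin n) ℂ)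
    (X₁' Y₁' X₂' Y₂' : Matrix (Fin n) (Fin n) ℂ) (t₀ : ℝ)
    (hL₁ : ∀ t, IsLagrangianFrame (X₁ t) (Y₁ t))
    (hL₂ : ∀ t, IsLagrangianFrame (X₂ t) (Y₂ t))
    (hdX₁ : ∀ i j, HasDerivAt (fun t => X₁ t i j) (X₁' i j) t₀)
    (hdY₁ : ∀ i j, HasDerivAt (fun t => Y₁ t i j) (Y₁' i j) t₀)
    (hdX₂ : ∀ i j, HasDerivAt (fun t => X₂ t i j) (X₂' i j) t₀)
    (hdY₂ : ∀ i j, HasDerivAt (fun t => Y₂ t i j) (Y₂' i j) t₀) :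
    (∀ i j, HasDerivAt (fun t => W1 (X₁ t) (Y₁ t) i j)
      ((Complex.I • (W1 (X₁ t₀) (Y₁ t₀) * Om1 (X₁ t₀) (Y₁ t₀) X₁' Y₁')) i j) t₀) ∧
    (∀ i j, HasDerivAt (fun t => W2 (X₂ t) (Y₂ t) i j)
      ((Complex.I • (W2 (X₂ t₀) (Y₂ t₀) * Om2 (X₂ t₀) (Y₂ t₀) X₂' Y₂')) i j) t₀) ∧
    (∀ i j, HasDerivAt (fun t => (-(W1 (X₁ t) (Y₁ t) * W2 (X₂ t) (Y₂ t))) i j)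
      ((Complex.I • ((-(W1 (X₁ t₀) (Y₁ t₀) * W2 (X₂ t₀) (Y₂ t₀))) *
        ((W2 (X₂ t₀) (Y₂ t₀))ᴴ * Om1 (X₁ t₀) (Y₁ t₀) X₁' Y₁' * W2 (X₂ t₀) (Y₂ t₀) +
          Om2 (X₂ t₀) (Y₂ t₀) X₂' Y₂'))) i j) t₀) := by
  have h₁ := hasDerivAt_W1 (hL₁ t₀) (hasDerivAt_matrix_iff.mpr hdX₁)
    (hasDerivAt_matrix_iff.mpr hdY₁)
  have h₂ := hasDerivAt_W2 (hL₂ t₀) (hasDerivAt_matrix_iff.mpr hdX₂)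
    (hasDerivAt_matrix_iff.mpr hdY₂)
  refine ⟨hasDerivAt_matrix_iff.mp h₁, hasDerivAt_matrix_iff.mp h₂,
    hasDerivAt_matrix_iff.mp ((h₁.mul h₂).neg.congr_deriv ?_)⟩
  have hW₂ : ∀ Z, W2 (X₂ t₀) (Y₂ t₀) * ((W2 (X₂ t₀) (Y₂ t₀))ᴴ * Z) = Z := fun Z => by
    rw [← Matrix.mul_assoc, ← star_eq_conjTranspose,
      Unitary.mul_star_self_of_mem (hL₂ t₀).W2_mem_unitaryGroup, Matrix.one_mul]
  simp only [Matrix.mul_add, Matrix.neg_mul, Matrix.smul_mul, Matrix.mul_smul, Matrix.mul_assoc,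
    hW₂]
  module
end
end
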